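/- There is a coupling of the chain with matrix K_λ on V and the chain with matrix P^λ on V ∪ {∂}, both started from the same x ∈ V, under which for every starting state x the cover times of V satisfy E_x[τ_cov(K_λ,V)] ≤ E_x[τ_cov(P^λ,V)] ≤ 2·E_x[τ_cov(K_λ,V)]. -/

import Mathlib

open scoped BigOperators

/- `pathSum P x t A`: probability, for the chain with transition matrix `P` started
at `x`, of the event `A` about the first `t+1` positions of the trajectory. -/
open Classical in
noncomputable def pathSum {S : Type*} [Fintype S] (P : S → S → ℝ) (x : S) (t : ℕ)
    (A : (Fin (t+1) → S) → Prop) : ℝ :=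
  ∑ w : Fin (t+1) → S,
    if w 0 = x ∧ A w then ∏ i : Fin t, P (w i.castSucc) (w i.succ) else 0

/-- `P_x(τ_cov > t)`: the chain started at `x` has not visited every state by time `t`. -/
noncomputable def coverTail {S : Type*} [Fintype S] (P : S → S → ℝ) (x : S) (t : ℕ) : ℝ :=
  pathSum P x t (fun w => ¬ ∀ v : S, ∃ i, w i = v)

/-- `E_x[τ_cov]`, the expected cover time started from `x`. -/
noncomputable def expCov {S : Type*} [Fintype S] (P : S → S → ℝ) (x : S) : ℝ :=
  ∑' t : ℕ, coverTail P x t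

/-- `t_cov = max_x E_x[τ_cov]`. -/
noncomputable def tcov {S : Type*} [Fintype S] [Nonempty S] (P : S → S → ℝ) : ℝ :=
  ⨆ x : S, expCov P x

/-- The auxiliary transition matrix `P^λ` on `V ∪ {∂}`, where `∂` is modelled by
`none : Option V`. -/
def Plam {V : Type*} (P : V → V → ℝ) (π : V → ℝ) (lam : ℝ) :
    Option V → Option V → ℝ
  | some x, some y => (1 - lam) * P x y
  | some _, none => lam
  | none, some y => π y
  | none, none => 0

/-- `E_x[τ_cov(P^λ, V)]`: the expected time for the auxiliary chain on `V ∪ {∂}`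
started at `x` to visit every state of `V` (not necessarily `∂`). -/
noncomputable def expCovV {V : Type*} [Fintype V] (Q : Option V → Option V → ℝ)
    (x : Option V) : ℝ :=
  ∑' t : ℕ, pathSum Q x t (fun w => ¬ ∀ v : V, ∃ i, w i = some v)

/-!
Run both chains on the same geometric(λ) clocks: where `K_λ` jumps to a fresh `π`-sample,
`P^λ` first steps to `∂` and then to the same sample. The `P^λ`-path is thus the `K_λ`-path
with at most one visit to `∂` inserted after each step, so it covers `V` no sooner, and by time
`2t` whenever `K_λ` has covered by time `t`. At the level of tails this reads
`P_x(τ_K > t) ≤ P_x(τ_{P^λ} > t)` and `P_x(τ_{P^λ} > 2t) ≤ P_x(τ_K > t)`, both proved by induction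
on `t` through the one-step recursion for the probability of not yet having covered a set `R`;
summing the tails gives the claim. Everything is summable because `K_λ ≥ λπ` entrywise, which
gives the cover time of `K_λ` geometric tails.
-/

section PathSum

open Classical

variable {S : Type*} [Fintype S] {P : S → S → ℝ}

lemma pathSum_nonneg (hP : ∀ x y, 0 ≤ P x y) (x : S) (t : ℕ) (A : (Fin (t+1) → S) → Prop) :
    0 ≤ pathSum P x t A :=
  Finset.sum_nonneg fun _ _ => ite_nonneg (Finset.prod_nonneg fun _ _ => hP _ _) le_rfl

lemma pathSum_mono (hP : ∀ x y, 0 ≤ P x y) (x : S) (t : ℕ) {A B : (Fin (t+1) → S) → Prop}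
    (hAB : ∀ w, A w → B w) : pathSum P x t A ≤ pathSum P x t B := by
  refine Finset.sum_le_sum fun w _ => ?_
  by_cases hA : w 0 = x ∧ A w
  · rw [if_pos hA, if_pos ⟨hA.1, hAB w hA.2⟩]
  · exact (if_neg hA).trans_le (ite_nonneg (Finset.prod_nonneg fun _ _ => hP _ _) le_rfl)

lemma prod_le_pathSum (hP : ∀ x y, 0 ≤ P x y) {x : S} {t : ℕ} {A : (Fin (t+1) → S) → Prop}
    (w : Fin (t+1) → S) (hw0 : w 0 = x) (hA : A w) :
    ∏ i : Fin t, P (w i.castSucc) (w i.succ) ≤ pathSum P x t A := by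
  unfold pathSum
  refine le_trans (le_of_eq ?_) (Finset.single_le_sum (fun _ _ => ?_) (Finset.mem_univ w))
  · rw [if_pos ⟨hw0, hA⟩]
  · exact ite_nonneg (Finset.prod_nonneg fun _ _ => hP _ _) le_rfl

lemma pathSum_zero (P : S → S → ℝ) (x : S) (A : (Fin 1 → S) → Prop) :
    pathSum P x 0 A = if A (fun _ => x) then 1 else 0 := by
  unfold pathSum
  rw [Fintype.sum_eq_single (fun _ => x) fun w hw => if_neg fun h => hw (funext fun i => by
    rw [Fin.fin_one_eq_zero i, h.1])]
  simp

lemma pathSum_succ (P : S → S → ℝ) (x : S) (t : ℕ) (A : (Fin (t+2) → S) → Prop) :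
    pathSum P x (t+1) A = ∑ y, P x y * pathSum P y t (fun w => A (Fin.cons x w)) := by
  unfold pathSum
  rw [← (Fin.consEquiv fun _ => S).sum_comp, Fintype.sum_prod_type,
    Fintype.sum_eq_single x fun a ha => Finset.sum_eq_zero fun w _ => if_neg fun h => ha h.1]
  simp only [Finset.mul_sum]
  rw [Finset.sum_comm]
  refine Fintype.sum_congr _ _ fun w => ?_
  rw [Fintype.sum_eq_single (w 0) fun y hy => by simp [Ne.symm hy]]
  simp [Fin.consEquiv, Fin.prod_univ_succ]

lemma pathSum_true (hrow : ∀ x, ∑ y, P x y = 1) (x : S) (t : ℕ) :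
    pathSum P x t (fun _ => True) = 1 := by
  induction t generalizing x with
  | zero => simp [pathSum_zero]
  | succ t ih => simp [pathSum_succ, ih, hrow]

lemma pathSum_not (hrow : ∀ x, ∑ y, P x y = 1) (x : S) (t : ℕ) (A : (Fin (t+1) → S) → Prop) :
    pathSum P x t (fun w => ¬ A w) = 1 - pathSum P x t A := by
  rw [← pathSum_true hrow x t, eq_sub_iff_add_eq', pathSum, pathSum, pathSum,
    ← Finset.sum_add_distrib]
  refine Fintype.sum_congr _ _ fun w => ?_
  by_cases h0 : w 0 = x <;> by_cases hA : A w <;> simp [h0, hA]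

end PathSum

/-- `P_x(τ_cov(P, R) > t)`. -/
noncomputable def setCoverTail {S : Type*} [Fintype S] (P : S → S → ℝ) (x : S) (t : ℕ)
    (R : Set S) : ℝ :=
  pathSum P x t (fun w => ¬ R ⊆ Set.range w)

section SetCoverTail

open Classical

variable {S : Type*} [Fintype S] {P : S → S → ℝ}

lemma expCov_eq_tsum_setCoverTail (P : S → S → ℝ) (x : S) :
    expCov P x = ∑' t, setCoverTail P x t Set.univ := by
  simp only [expCov, coverTail, setCoverTail, Set.univ_subset_iff, Set.range_eq_univ]
  rfl

lemma expCovV_eq_tsum_setCoverTail {V : Type*} [Fintype V] (Q : Option V → Option V → ℝ)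
    (x : Option V) : expCovV Q x = ∑' t, setCoverTail Q x t (Set.range some) := by
  simp only [expCovV, setCoverTail, Set.range_subset_iff, Set.mem_range]

lemma setCoverTail_nonneg (hP : ∀ x y, 0 ≤ P x y) (x : S) (t : ℕ) (R : Set S) :
    0 ≤ setCoverTail P x t R :=
  pathSum_nonneg hP x t _

lemma setCoverTail_le_one (hP : ∀ x y, 0 ≤ P x y) (hrow : ∀ x, ∑ y, P x y = 1)
    (x : S) (t : ℕ) (R : Set S) : setCoverTail P x t R ≤ 1 :=
  (pathSum_mono hP x t fun _ _ => trivial).trans_eq (pathSum_true hrow x t)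

lemma setCoverTail_mono (hP : ∀ x y, 0 ≤ P x y) (x : S) (t : ℕ) {R R' : Set S}
    (h : R ⊆ R') : setCoverTail P x t R ≤ setCoverTail P x t R' :=
  pathSum_mono hP x t fun _ hR hR' => hR (h.trans hR')

lemma setCoverTail_eq_zero {x : S} {R : Set S} (hR : R ⊆ {x}) (t : ℕ) :
    setCoverTail P x t R = 0 :=
  Finset.sum_eq_zero fun _ _ => if_neg fun h =>
    h.2 (hR.trans (Set.singleton_subset_iff.mpr ⟨0, h.1⟩))

lemma setCoverTail_zero (P : S → S → ℝ) (x : S) (R : Set S) :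
    setCoverTail P x 0 R = if R ⊆ {x} then 0 else 1 := by
  rw [setCoverTail, pathSum_zero, Set.range_const]
  by_cases hR : R ⊆ {x} <;> simp [hR]

lemma setCoverTail_succ (P : S → S → ℝ) (x : S) (t : ℕ) (R : Set S) :
    setCoverTail P x (t+1) R = ∑ y, P x y * setCoverTail P y t (R \ {x}) := by
  simp only [setCoverTail, pathSum_succ, Fin.range_cons, Set.sdiff_singleton_subset_iff]

lemma setCoverTail_succ_le (hP : ∀ x y, 0 ≤ P x y) (hrow : ∀ x, ∑ y, P x y = 1)
    (x : S) (t : ℕ) (R : Set S) : setCoverTail P x (t+1) R ≤ setCoverTail P x t R := by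
  induction t generalizing x R with
  | zero =>
    rw [setCoverTail_zero]
    split_ifs with hR
    · rw [setCoverTail_eq_zero hR]
    · exact setCoverTail_le_one hP hrow x 1 R
  | succ t ih =>
    rw [setCoverTail_succ, setCoverTail_succ P x t]
    exact Finset.sum_le_sum fun y _ => mul_le_mul_of_nonneg_left (ih y _) (hP x y)

lemma setCoverTail_add_le_mul (hP : ∀ x y, 0 ≤ P x y) {N : ℕ} {M : ℝ}
    (hM : ∀ y, setCoverTail P y N Set.univ ≤ M) (s : ℕ) (x : S) (R : Set S) :
    setCoverTail P x (s + N) R ≤ setCoverTail P x s R * M := by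
  induction s generalizing x R with
  | zero =>
    rw [zero_add, setCoverTail_zero]
    split_ifs with hR
    · rw [setCoverTail_eq_zero hR, zero_mul]
    · rw [one_mul]
      exact (setCoverTail_mono hP x N (Set.subset_univ R)).trans (hM x)
  | succ s ih =>
    rw [add_right_comm, setCoverTail_succ, setCoverTail_succ, Finset.sum_mul]
    refine Finset.sum_le_sum fun y _ => ?_
    rw [mul_assoc]
    exact mul_le_mul_of_nonneg_left (ih y _) (hP x y)

lemma setCoverTail_le_pow_div (hP : ∀ x y, 0 ≤ P x y) (hrow : ∀ x, ∑ y, P x y = 1)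
    {N : ℕ} {M : ℝ} (hM0 : 0 ≤ M) (hM : ∀ y, setCoverTail P y N Set.univ ≤ M) (x : S)
    (t : ℕ) : setCoverTail P x t Set.univ ≤ M ^ (t / N) := by
  have key : ∀ q r, setCoverTail P x (r + N * q) Set.univ ≤ M ^ q := by
    intro q r
    induction q with
    | zero => simpa using setCoverTail_le_one hP hrow x r Set.univ
    | succ q ih =>
      rw [Nat.mul_succ, ← add_assoc]
      calc setCoverTail P x (r + N * q + N) Set.univ
          ≤ setCoverTail P x (r + N * q) Set.univ * M :=
            setCoverTail_add_le_mul hP hM (r + N * q) x Set.univ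
        _ ≤ M ^ q * M := mul_le_mul_of_nonneg_right ih hM0
        _ = M ^ (q + 1) := (pow_succ M q).symm
  simpa only [Nat.mod_add_div] using key (t / N) (t % N)

lemma setCoverTail_card_le (hP : ∀ x y, 0 ≤ P x y) (hrow : ∀ x, ∑ y, P x y = 1)
    {μ : S → ℝ} (hμ0 : ∀ v, 0 ≤ μ v) (hμP : ∀ u v, μ v ≤ P u v) (y : S) :
    setCoverTail P y (Fintype.card S) Set.univ ≤ 1 - ∏ v, μ v := by
  set e := Fintype.equivFin S
  let w : Fin (Fintype.card S + 1) → S := Fin.cons y e.symm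
  have hw : Set.univ ⊆ Set.range w := fun v _ => ⟨(e v).succ, by simp [w]⟩
  have hcover : ∏ v, μ v ≤ pathSum P y (Fintype.card S) (fun w => Set.univ ⊆ Set.range w) :=
    calc ∏ v, μ v = ∏ i, μ (e.symm i) := (e.symm.prod_comp μ).symm
      _ ≤ ∏ i, P (w i.castSucc) (w i.succ) :=
        Finset.prod_le_prod (fun _ _ => hμ0 _) fun i _ => by simpa [w] using hμP _ _
      _ ≤ _ := prod_le_pathSum hP w rfl hw
  rw [setCoverTail, pathSum_not hrow]
  linarith

lemma summable_of_le_pow_div {a : ℕ → ℝ} (ha : ∀ t, 0 ≤ a t) {M : ℝ} (hM0 : 0 ≤ M)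
    (hM1 : M < 1) {N : ℕ} [NeZero N] (h : ∀ t, a t ≤ M ^ (t / N)) : Summable a := by
  have hprod : Summable fun p : ℕ × Fin N => M ^ p.1 := by
    simpa using (summable_geometric_of_lt_one hM0 hM1).mul_of_nonneg
      (summable_of_hasFiniteSupport (f := fun _ : Fin N => (1 : ℝ)) (Set.toFinite _))
      (fun _ => pow_nonneg hM0 _) (fun _ => zero_le_one)
  exact .of_nonneg_of_le ha h ((Nat.divModEquiv N).summable_iff.mpr hprod)

lemma summable_setCoverTail (hP : ∀ x y, 0 ≤ P x y) (hrow : ∀ x, ∑ y, P x y = 1)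
    {μ : S → ℝ} (hμ0 : ∀ v, 0 < μ v) (hμP : ∀ u v, μ v ≤ P u v) (x : S) :
    Summable fun t => setCoverTail P x t Set.univ := by
  have : Nonempty S := ⟨x⟩
  have : NeZero (Fintype.card S) := ⟨Fintype.card_ne_zero (α := S)⟩
  have hM := setCoverTail_card_le hP hrow (fun v => (hμ0 v).le) hμP
  have hM0 : 0 ≤ 1 - ∏ v, μ v := (setCoverTail_nonneg hP x _ _).trans (hM x)
  have hM1 : 1 - ∏ v, μ v < 1 := sub_lt_self 1 (Finset.prod_pos fun v _ => hμ0 v)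
  exact summable_of_le_pow_div (setCoverTail_nonneg hP x · _) hM0 hM1
    (setCoverTail_le_pow_div hP hrow hM0 hM x)

end SetCoverTail

def Klam {V : Type*} (P : V → V → ℝ) (π : V → ℝ) (lam : ℝ) : V → V → ℝ :=
  fun u v => (1 - lam) * P u v + lam * π v

section Lazy

variable {V : Type*} {P : V → V → ℝ} {π : V → ℝ} {lam : ℝ}

lemma Plam_nonneg (hP : ∀ x y, 0 ≤ P x y) (hπ : ∀ x, 0 ≤ π x) (hlam0 : 0 ≤ lam)
    (hlam1 : lam ≤ 1) : ∀ z z', 0 ≤ Plam P π lam z z'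
  | some _, some _ => mul_nonneg (sub_nonneg.mpr hlam1) (hP _ _)
  | some _, none => hlam0
  | none, some _ => hπ _
  | none, none => le_rfl

lemma Klam_eq_Plam (P : V → V → ℝ) (π : V → ℝ) (lam : ℝ) (u v : V) :
    Klam P π lam u v
      = Plam P π lam (some u) (some v) + Plam P π lam (some u) none * Plam P π lam none (some v) :=
  rfl

lemma lam_mul_le_Klam (hP : ∀ x y, 0 ≤ P x y) (hlam1 : lam ≤ 1) (u v : V) :
    lam * π v ≤ Klam P π lam u v :=
  le_add_of_nonneg_left (mul_nonneg (sub_nonneg.mpr hlam1) (hP u v))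

lemma image_some_diff_singleton (R : Set V) (x : V) :
    some '' R \ {some x} = some '' (R \ {x}) := by
  rw [Set.image_sdiff (Option.some_injective V), Set.image_singleton]

lemma Klam_nonneg (hQ : ∀ z z', 0 ≤ Plam P π lam z z') (u v : V) : 0 ≤ Klam P π lam u v :=
  (Klam_eq_Plam P π lam u v).symm ▸ add_nonneg (hQ _ _) (mul_nonneg (hQ _ _) (hQ _ _))

variable [Fintype V]

lemma sum_Plam (hrow : ∀ x, ∑ y, P x y = 1) (hπ1 : ∑ x, π x = 1) :
    ∀ z, ∑ z', Plam P π lam z z' = 1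
  | some x => by simp [Fintype.sum_option, Plam, ← Finset.mul_sum, hrow]
  | none => by simpa [Fintype.sum_option, Plam] using hπ1

lemma sum_Klam (hrow : ∀ x, ∑ y, P x y = 1) (hπ1 : ∑ x, π x = 1) (u : V) :
    ∑ v, Klam P π lam u v = 1 := by
  simp [Klam, Finset.sum_add_distrib, ← Finset.mul_sum, hrow, hπ1]

lemma sum_Klam_mul (x : V) (f : V → ℝ) :
    ∑ y, Klam P π lam x y * f y = ∑ y, (1 - lam) * P x y * f y + lam * ∑ y, π y * f y := by
  simp only [Klam, add_mul, Finset.sum_add_distrib, Finset.mul_sum, mul_assoc]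

lemma setCoverTail_Plam_some_succ (x : V) (t : ℕ) (R : Set V) :
    setCoverTail (Plam P π lam) (some x) (t+1) (some '' R)
      = lam * setCoverTail (Plam P π lam) none t (some '' (R \ {x}))
        + ∑ y, (1 - lam) * P x y * setCoverTail (Plam P π lam) (some y) t (some '' (R \ {x})) := by
  rw [setCoverTail_succ, Fintype.sum_option, image_some_diff_singleton]
  rfl

lemma setCoverTail_Plam_none_succ (t : ℕ) (R : Set V) :
    setCoverTail (Plam P π lam) none (t+1) (some '' R)
      = ∑ y, π y * setCoverTail (Plam P π lam) (some y) t (some '' R) := by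
  rw [setCoverTail_succ, Fintype.sum_option, Set.sdiff_singleton_eq_self (by simp)]
  simp [Plam]

lemma setCoverTail_some_zero (Q : Option V → Option V → ℝ) (K : V → V → ℝ) (x : V)
    (R : Set V) : setCoverTail Q (some x) 0 (some '' R) = setCoverTail K x 0 R := by
  rw [setCoverTail_zero, setCoverTail_zero, ← Set.image_singleton,
    Set.image_subset_image_iff (Option.some_injective V)]

/-- The jump `x → π` of `K_λ` is the detour `x → ∂ → π` of `P^λ`, one step longer, and the
tails decrease in time. -/
lemma sum_Klam_mul_le_setCoverTail_Plam (hQ : ∀ z z', 0 ≤ Plam P π lam z z')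
    (hQrow : ∀ z, ∑ z', Plam P π lam z z' = 1) (x : V) (t : ℕ) (R : Set V) :
    ∑ y, Klam P π lam x y * setCoverTail (Plam P π lam) (some y) t (some '' (R \ {x}))
      ≤ setCoverTail (Plam P π lam) (some x) (t+1) (some '' R) := by
  rw [sum_Klam_mul, setCoverTail_Plam_some_succ, add_comm, ← setCoverTail_Plam_none_succ]
  exact add_le_add (mul_le_mul_of_nonneg_left
    (setCoverTail_succ_le hQ hQrow none t _) (hQ (some x) none)) le_rfl

/-- In two steps `P^λ` makes either a `P`-step (and then one step more) or the whole detour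
`x → ∂ → π`. -/
lemma setCoverTail_Plam_le_sum_Klam_mul (hQ : ∀ z z', 0 ≤ Plam P π lam z z')
    (hQrow : ∀ z, ∑ z', Plam P π lam z z' = 1) (x : V) (t : ℕ) (R : Set V) :
    setCoverTail (Plam P π lam) (some x) (t+2) (some '' R)
      ≤ ∑ y, Klam P π lam x y * setCoverTail (Plam P π lam) (some y) t (some '' (R \ {x})) := by
  rw [sum_Klam_mul, setCoverTail_Plam_some_succ, setCoverTail_Plam_none_succ, add_comm]
  exact add_le_add (Finset.sum_le_sum fun y _ => mul_le_mul_of_nonneg_left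
    (setCoverTail_succ_le hQ hQrow _ t _) (hQ (some x) (some y))) le_rfl

lemma setCoverTail_Klam_le_Plam (hQ : ∀ z z', 0 ≤ Plam P π lam z z')
    (hQrow : ∀ z, ∑ z', Plam P π lam z z' = 1) (t : ℕ) (x : V) (R : Set V) :
    setCoverTail (Klam P π lam) x t R ≤ setCoverTail (Plam P π lam) (some x) t (some '' R) := by
  induction t generalizing x R with
  | zero => exact (setCoverTail_some_zero _ _ x R).ge
  | succ t ih =>
    rw [setCoverTail_succ]
    refine (Finset.sum_le_sum fun y _ => mul_le_mul_of_nonneg_left (ih y _) ?_).trans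
      (sum_Klam_mul_le_setCoverTail_Plam hQ hQrow x t R)
    exact Klam_nonneg hQ x y

lemma setCoverTail_Plam_two_mul_le_Klam (hQ : ∀ z z', 0 ≤ Plam P π lam z z')
    (hQrow : ∀ z, ∑ z', Plam P π lam z z' = 1) (t : ℕ) (x : V) (R : Set V) :
    setCoverTail (Plam P π lam) (some x) (2 * t) (some '' R) ≤ setCoverTail (Klam P π lam) x t R := by
  induction t generalizing x R with
  | zero => exact (setCoverTail_some_zero _ _ x R).le
  | succ t ih =>
    rw [Nat.mul_succ, setCoverTail_succ (Klam P π lam)]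
    refine (setCoverTail_Plam_le_sum_Klam_mul hQ hQrow x (2 * t) R).trans
      (Finset.sum_le_sum fun y _ => mul_le_mul_of_nonneg_left (ih y _) ?_)
    exact Klam_nonneg hQ x y

end Lazy

section EvenOdd

variable {a b : ℕ → ℝ}

lemma summable_of_even_odd_le (hb : ∀ t, 0 ≤ b t) (ha : Summable a)
    (heven : ∀ k, b (2 * k) ≤ a k) (hodd : ∀ k, b (2 * k + 1) ≤ a k) : Summable b :=
  (ha.of_nonneg_of_le (fun _ => hb _) heven).even_add_odd
    (ha.of_nonneg_of_le (fun _ => hb _) hodd)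

lemma tsum_le_two_mul_tsum_of_even_odd_le (hb : ∀ t, 0 ≤ b t) (ha : Summable a)
    (heven : ∀ k, b (2 * k) ≤ a k) (hodd : ∀ k, b (2 * k + 1) ≤ a k) :
    ∑' t, b t ≤ 2 * ∑' t, a t := by
  have hbe := ha.of_nonneg_of_le (fun _ => hb _) heven
  have hbo := ha.of_nonneg_of_le (fun _ => hb _) hodd
  rw [← tsum_even_add_odd hbe hbo, two_mul]
  exact add_le_add (hbe.tsum_le_tsum heven ha) (hbo.tsum_le_tsum hodd ha)

end EvenOdd

theorem coupling_cover_time_comparison_general {V : Type*} [Fintype V]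
    (P : V → V → ℝ) (π : V → ℝ)
    (hnn : ∀ x y, 0 ≤ P x y) (hrow : ∀ x, ∑ y, P x y = 1)
    (hπ0 : ∀ x, 0 < π x) (hπ1 : ∑ x, π x = 1)
    (lam : ℝ) (hlam0 : 0 < lam) (hlam1 : lam < 1) :
    ∀ x : V,
      expCov (fun u v => (1 - lam) * P u v + lam * π v) x
          ≤ expCovV (Plam P π lam) (some x) ∧
        expCovV (Plam P π lam) (some x)
          ≤ 2 * expCov (fun u v => (1 - lam) * P u v + lam * π v) x := by
  intro x
  have hQ := Plam_nonneg hnn (fun v => (hπ0 v).le) hlam0.le hlam1.le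
  have hQrow := sum_Plam (lam := lam) hrow hπ1
  have hKsum : Summable fun t => setCoverTail (Klam P π lam) x t Set.univ :=
    summable_setCoverTail (Klam_nonneg hQ) (sum_Klam hrow hπ1)
      (fun v => mul_pos hlam0 (hπ0 v)) (lam_mul_le_Klam hnn hlam1.le) x
  have hKQ (t : ℕ) := setCoverTail_Klam_le_Plam hQ hQrow t x Set.univ
  have hQK_even (k : ℕ) := setCoverTail_Plam_two_mul_le_Klam hQ hQrow k x Set.univ
  have hQK_odd (k : ℕ) := (setCoverTail_succ_le hQ hQrow _ (2 * k) _).trans (hQK_even k)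
  have hQnn (t : ℕ) := setCoverTail_nonneg hQ (some x) t (some '' Set.univ)
  change expCov (Klam P π lam) x ≤ _ ∧ _ ≤ 2 * expCov (Klam P π lam) x
  rw [expCov_eq_tsum_setCoverTail, expCovV_eq_tsum_setCoverTail, ← Set.image_univ]
  exact ⟨hKsum.tsum_le_tsum hKQ (summable_of_even_odd_le hQnn hKsum hQK_even hQK_odd),
    tsum_le_two_mul_tsum_of_even_odd_le hQnn hKsum hQK_even hQK_odd⟩

/-- started from the same `x ∈ V`, the expected times for the chains
`K_λ` (on `V`) and `P^λ` (on `V ∪ {∂}`) to cover `V` satisfy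
`E_x[τ_cov(K_λ,V)] ≤ E_x[τ_cov(P^λ,V)] ≤ 2·E_x[τ_cov(K_λ,V)]`
(as shown in the paper by a coupling using common geometric(λ) clocks). -/
theorem coupling_cover_time_comparison {V : Type*} [Fintype V] [DecidableEq V]
    [Nonempty V] (P : V → V → ℝ) (π : V → ℝ)
    (hnn : ∀ x y, 0 ≤ P x y) (hrow : ∀ x, ∑ y, P x y = 1)
    (hirr : ∀ x y, ∃ n : ℕ, 0 < (Matrix.of P ^ n) x y)
    (hπ0 : ∀ x, 0 < π x) (hπ1 : ∑ x, π x = 1)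
    (hrev : ∀ x y, π x * P x y = π y * P y x)
    (lam : ℝ) (hlam0 : 0 < lam) (hlam1 : lam < 1) :
    ∀ x : V,
      expCov (fun u v => (1 - lam) * P u v + lam * π v) x
          ≤ expCovV (Plam P π lam) (some x) ∧
        expCovV (Plam P π lam) (some x)
          ≤ 2 * expCov (fun u v => (1 - lam) * P u v + lam * π v) x :=
  coupling_cover_time_comparison_general P π hnn hrow hπ0 hπ1 lam hlam0 hlam1
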